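/- For all nonnegative integers n, positive integers k, and real (or rational polynomial variable) x, Ch_n^{(k)}(x) = Σ_{l=0}^{n} s(n,l) E_l^{(k)}(x), where s(n,l) are the signed Stirling numbers of the first kind and E_l^{(k)}(x) are the higher-order Euler polynomials. -/

import Mathlib

open PowerSeries Finset

/-- Higher-order Changhee numbers of the first kind. -/
noncomputable def Ch (k n : ℕ) : ℚ := (-1/2)^n * n.factorial * ((n+k-1).choose n)

/-- Signed Stirling numbers of the first kind, via coefficients of the falling factorial. -/
noncomputable def stirling1 (n l : ℕ) : ℚ :=
  (∏ i ∈ Finset.range n, (Polynomial.X - (i : Polynomial ℚ))).coeff l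

/-- Stirling numbers of the second kind, via (e^t-1)^n = n! Σ S₂(m,n) t^m/m!. -/
noncomputable def stirling2 (m n : ℕ) : ℚ :=
  (m.factorial : ℚ) / n.factorial * PowerSeries.coeff (R := ℚ) m ((PowerSeries.exp ℚ - 1)^n)

/-- Higher-order Euler numbers, from (2/(e^t+1))^k. -/
noncomputable def EulerN (k l : ℕ) : ℚ :=
  l.factorial * PowerSeries.coeff (R := ℚ) l ((2 * (PowerSeries.exp ℚ + 1)⁻¹)^k)

/-- Higher-order Euler polynomials, from (2/(e^t+1))^k e^{xt}. -/
noncomputable def EulerP (k : ℕ) (x : ℚ) (l : ℕ) : ℚ :=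
  l.factorial * PowerSeries.coeff (R := ℚ) l
    ((2 * (PowerSeries.exp ℚ + 1)⁻¹)^k * PowerSeries.rescale x (PowerSeries.exp ℚ))

/-- Generalized binomial coefficient. -/
noncomputable def gbinom (x : ℚ) (m : ℕ) : ℚ := (∏ i ∈ Finset.range m, (x - i)) / m.factorial

/-- Binomial series (1+t)^x. -/
noncomputable def onePlusXPow (x : ℚ) : PowerSeries ℚ := PowerSeries.mk fun m => gbinom x m

/-- Higher-order Changhee polynomials of the first kind, from (2/(2+t))^k (1+t)^x. -/
noncomputable def ChP (k : ℕ) (x : ℚ) (n : ℕ) : ℚ :=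
  n.factorial * PowerSeries.coeff (R := ℚ) n
    ((2 * (2 + PowerSeries.X : PowerSeries ℚ)⁻¹)^k * onePlusXPow x)

/-- Higher-order Changhee numbers of the second kind, from (2/(2+t))^k (1+t)^k. -/
noncomputable def ChhN (k n : ℕ) : ℚ :=
  n.factorial * PowerSeries.coeff (R := ℚ) n
    ((2 * (2 + PowerSeries.X : PowerSeries ℚ)⁻¹)^k * (1 + PowerSeries.X)^k)

/-- Higher-order Changhee polynomials of the second kind, from (2/(2+t))^k (1+t)^{x+k}. -/
noncomputable def ChP2 (k : ℕ) (x : ℚ) (n : ℕ) : ℚ :=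
  n.factorial * PowerSeries.coeff (R := ℚ) n
    ((2 * (2 + PowerSeries.X : PowerSeries ℚ)⁻¹)^k * onePlusXPow (x + k))

/-!
Substituting `t = e^u - 1` sends `(2/(2+t))^k (1+t)^x` to `(2/(e^u+1))^k e^{xu}`; comparing
coefficients gives `E_l^{(k)}(x) = ∑_m S(l,m) Ch_m^{(k)}(x)` with `S` the Stirling numbers of the
second kind. The same substitution applied to `(1+t)^N` gives `e^{Nu}`, whence
`N^l = ∑_m S(l,m) (N)_m` for all natural `N`, hence `X^l = ∑_m S(l,m) (X)_m` as polynomials. So the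
Stirling matrices of the two kinds are inverse to each other, and inverting the first relation
gives the theorem.
-/

namespace PowerSeries

theorem subst_inv {k : Type*} [Field k] {a : k⟦X⟧} (ha : HasSubst a) {f : k⟦X⟧}
    (hf : constantCoeff f ≠ 0) : (f⁻¹.subst a : k⟦X⟧) = (f.subst a : k⟦X⟧)⁻¹ := by
  have hmul : (f⁻¹.subst a : k⟦X⟧) * f.subst a = 1 := by
    rw [← subst_mul ha, PowerSeries.inv_mul_cancel f hf, ← coe_substAlgHom ha, map_one]
  have hunit : constantCoeff (f.subst a : k⟦X⟧) ≠ 0 :=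
    right_ne_zero_of_mul_eq_one (by rw [← map_mul, hmul, map_one])
  exact (eq_inv_iff_mul_eq_one hunit).mpr hmul

variable {A : Type*} [CommRing A] [Algebra ℚ A]

theorem coeff_exp_sub_one_pow_of_lt {l m : ℕ} (h : l < m) :
    coeff l ((exp A - 1) ^ m) = 0 :=
  X_pow_dvd_iff.mp (pow_dvd_pow_of_dvd (X_dvd_iff.mpr (by simp [constantCoeff_exp])) m) l h

theorem coeff_subst_exp_sub_one (f : A⟦X⟧) (l : ℕ) :
    coeff l (f.subst (exp A - 1) : A⟦X⟧) =
      ∑ m ∈ range (l + 1), coeff m f * coeff l ((exp A - 1) ^ m) := by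
  rw [coeff_subst' HasSubst.exp_sub_one, finsum_eq_sum_of_support_subset (s := range (l + 1))]
  · simp only [smul_eq_mul]
  · intro m hm
    by_contra hml
    simp only [coe_range, Set.mem_Iio, not_lt] at hml
    exact hm (by simp [coeff_exp_sub_one_pow_of_lt (A := A) (by omega : l < m)])

end PowerSeries

theorem gbinom_eq_eval_descPochhammer_div (x : ℚ) (m : ℕ) :
    gbinom x m = (descPochhammer ℚ m).eval x / m.factorial := by
  rw [gbinom, descPochhammer_eval_eq_prod_range]

theorem onePlusXPow_natCast (N : ℕ) : onePlusXPow N = (1 + X) ^ N := by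
  ext m
  rw [onePlusXPow, coeff_mk, gbinom_eq_eval_descPochhammer_div,
    ← Nat.cast_choose_eq_descPochhammer_div, ← binomialSeries_nat (R := ℚ), binomialSeries_coeff,
    Ring.choose_natCast, smul_eq_mul, mul_one]

theorem stirling1_eq_coeff_descPochhammer (n l : ℕ) :
    stirling1 n l = (descPochhammer ℚ n).coeff l := by
  have hprod : descPochhammer ℚ n = ∏ i ∈ range n, (Polynomial.X - (i : Polynomial ℚ)) := by
    induction n with
    | zero => simp
    | succ n ih => rw [descPochhammer_succ_right, prod_range_succ, ← ih]
  rw [stirling1, hprod]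

theorem stirling2_eq_zero_of_lt {l m : ℕ} (h : l < m) : stirling2 l m = 0 := by
  rw [stirling2, coeff_exp_sub_one_pow_of_lt h, mul_zero]

theorem sum_range_stirling2_smul {M : Type*} [AddCommMonoid M] [Module ℚ M] {l N : ℕ} (h : l < N)
    (f : ℕ → M) : ∑ m ∈ range N, stirling2 l m • f m = ∑ m ∈ range (l + 1), stirling2 l m • f m :=
  (sum_subset (range_subset_range.mpr h) fun m _ hm => by
    rw [stirling2_eq_zero_of_lt (by simpa using hm), zero_smul]).symm

theorem subst_exp_sub_one_onePlusXPow_natCast (N : ℕ) :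
    ((onePlusXPow N).subst (exp ℚ - 1) : ℚ⟦X⟧) = rescale (N : ℚ) (exp ℚ) := by
  rw [onePlusXPow_natCast, ← coe_substAlgHom HasSubst.exp_sub_one, map_pow, map_add, map_one,
    substAlgHom_X, add_sub_cancel, exp_pow_eq_rescale_exp]

theorem coeff_subst_exp_sub_one_onePlusXPow (x : ℚ) (l : ℕ) :
    coeff l ((onePlusXPow x).subst (exp ℚ - 1) : ℚ⟦X⟧) =
      (∑ m ∈ range (l + 1), stirling2 l m • descPochhammer ℚ m).eval x / l.factorial := by
  rw [coeff_subst_exp_sub_one, Polynomial.eval_finsetSum, sum_div]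
  refine sum_congr rfl fun m _ => ?_
  rw [onePlusXPow, coeff_mk, gbinom_eq_eval_descPochhammer_div, Polynomial.eval_smul, stirling2,
    smul_eq_mul]
  field_simp

theorem sum_stirling2_smul_descPochhammer (l : ℕ) :
    ∑ m ∈ range (l + 1), stirling2 l m • descPochhammer ℚ m = Polynomial.X ^ l := by
  refine Polynomial.eq_of_infinite_eval_eq _ _
    ((Set.infinite_range_of_injective Nat.cast_injective).mono ?_)
  rintro _ ⟨N, rfl⟩
  have hcoeff := coeff_subst_exp_sub_one_onePlusXPow N l
  have hl : (l.factorial : ℚ) ≠ 0 := by positivity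
  rw [subst_exp_sub_one_onePlusXPow_natCast, coeff_rescale, coeff_exp, eq_div_iff hl] at hcoeff
  simpa [hl] using hcoeff.symm

theorem subst_exp_sub_one_onePlusXPow (x : ℚ) :
    ((onePlusXPow x).subst (exp ℚ - 1) : ℚ⟦X⟧) = rescale x (exp ℚ) := by
  ext l
  rw [coeff_subst_exp_sub_one_onePlusXPow, sum_stirling2_smul_descPochhammer, coeff_rescale,
    coeff_exp, Polynomial.eval_pow, Polynomial.eval_X, Algebra.algebraMap_self, RingHom.id_apply]
  ring

theorem subst_exp_sub_one_two_mul_two_add_X_inv :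
    ((2 * (2 + X)⁻¹ : ℚ⟦X⟧).subst (exp ℚ - 1) : ℚ⟦X⟧) = 2 * (exp ℚ + 1)⁻¹ := by
  have hunit : constantCoeff (2 + X : ℚ⟦X⟧) ≠ 0 := by
    rw [map_add, map_ofNat, constantCoeff_X]
    norm_num
  rw [subst_mul HasSubst.exp_sub_one, subst_inv HasSubst.exp_sub_one hunit,
    ← coe_substAlgHom HasSubst.exp_sub_one, map_add, map_ofNat, substAlgHom_X,
    show (2 : ℚ⟦X⟧) + (exp ℚ - 1) = exp ℚ + 1 by ring]

noncomputable def changheeSeries (k : ℕ) (x : ℚ) : ℚ⟦X⟧ :=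
  (2 * (2 + X)⁻¹) ^ k * onePlusXPow x

noncomputable def eulerSeries (k : ℕ) (x : ℚ) : ℚ⟦X⟧ :=
  (2 * (exp ℚ + 1)⁻¹) ^ k * rescale x (exp ℚ)

theorem subst_exp_sub_one_changheeSeries (k : ℕ) (x : ℚ) :
    ((changheeSeries k x).subst (exp ℚ - 1) : ℚ⟦X⟧) = eulerSeries k x := by
  rw [changheeSeries, subst_mul HasSubst.exp_sub_one, subst_pow HasSubst.exp_sub_one,
    subst_exp_sub_one_two_mul_two_add_X_inv, subst_exp_sub_one_onePlusXPow, eulerSeries]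

theorem EulerP_eq_sum_stirling2_mul_ChP (k : ℕ) (x : ℚ) (l : ℕ) :
    EulerP k x l = ∑ m ∈ range (l + 1), stirling2 l m * ChP k x m := by
  change l.factorial * coeff l (eulerSeries k x) = _
  rw [← subst_exp_sub_one_changheeSeries, coeff_subst_exp_sub_one, mul_sum]
  refine sum_congr rfl fun m _ => ?_
  rw [stirling2, ChP, ← changheeSeries]
  field_simp

noncomputable def stirling1Matrix (N : ℕ) : Matrix (Fin N) (Fin N) ℚ :=
  Matrix.of fun i j => stirling1 i j

noncomputable def stirling2Matrix (N : ℕ) : Matrix (Fin N) (Fin N) ℚ :=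
  Matrix.of fun i j => stirling2 i j

theorem stirling2Matrix_mul_stirling1Matrix (N : ℕ) :
    stirling2Matrix N * stirling1Matrix N = 1 := by
  ext i j
  have hsum := congrArg (Polynomial.coeff · j) (sum_stirling2_smul_descPochhammer i)
  simp only [Polynomial.finsetSum_coeff, Polynomial.coeff_smul, Polynomial.coeff_X_pow,
    ← stirling1_eq_coeff_descPochhammer, ← sum_range_stirling2_smul i.isLt] at hsum
  simp only [Matrix.mul_apply, Matrix.one_apply, stirling1Matrix, stirling2Matrix, Matrix.of_apply,
    Fin.ext_iff, eq_comm (a := (j : ℕ)), smul_eq_mul] at hsum ⊢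
  rwa [Fin.sum_univ_eq_sum_range (fun m => stirling2 i m * stirling1 m j)]

theorem stirling1Matrix_mul_stirling2Matrix (N : ℕ) :
    stirling1Matrix N * stirling2Matrix N = 1 :=
  mul_eq_one_comm.mp (stirling2Matrix_mul_stirling1Matrix N)

theorem changhee_poly_eq_stirling1_euler_general (n : ℕ) (k : ℕ) (x : ℚ) :
    ChP k x n = ∑ l ∈ Finset.range (n+1), stirling1 n l * EulerP k x l := by
  have hEuler : (fun l : Fin (n + 1) => EulerP k x l) =
      (stirling2Matrix (n + 1)).mulVec fun m => ChP k x m := by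
    ext l
    rw [EulerP_eq_sum_stirling2_mul_ChP]
    simp only [Matrix.mulVec, dotProduct, stirling2Matrix, Matrix.of_apply]
    rw [Fin.sum_univ_eq_sum_range (fun m => stirling2 l m * ChP k x m)]
    exact (sum_range_stirling2_smul l.isLt _).symm
  have hChP := congrFun (congrArg (stirling1Matrix (n + 1)).mulVec hEuler) (Fin.last n)
  rw [Matrix.mulVec_mulVec, stirling1Matrix_mul_stirling2Matrix, Matrix.one_mulVec] at hChP
  simp only [Matrix.mulVec, dotProduct, stirling1Matrix, Matrix.of_apply, Fin.val_last] at hChP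
  rw [← hChP, Fin.sum_univ_eq_sum_range (fun l => stirling1 n l * EulerP k x l)]

theorem changhee_poly_eq_stirling1_euler (n : ℕ) (k : ℕ) (hk : 0 < k) (x : ℚ) :
    ChP k x n = ∑ l ∈ Finset.range (n+1), stirling1 n l * EulerP k x l :=
  changhee_poly_eq_stirling1_euler_general n k x
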